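/- arXiv:1701.04327 — 4 statements merged into one kernel-verified Lean document; each statement's English description precedes it below -/
import Mathlib

section
/- Let g : {-1,1}^n → {-1,1}, q : {-1,1}^n → ℝ nonnegative with E_z[q(z)] = 1, and let V, W : {-1,1}^n → ℝ^d assign unit vectors to each input. Then E_{x,y}[g(x·y) q(x·y) ⟨V(x), W(y)⟩] ≤ max_{S ⊆ [n]} |(gq)^(S)|, i.e., the quantum (vector-strategy) bias of an XOR game for an XOR function on an XOR input distribution equals the classical bias. -/
open Finset

/-- The map identifying a bit with `±1`: `false ↦ 1`, `true ↦ -1`. -/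
noncomputable def chi (b : Bool) : ℝ := if b then -1 else 1

/-- Fourier coefficient `F^(S) = E_z[F(z) ∏_{i∈S} z_i]`. -/
noncomputable def fCoeff {n : ℕ} (F : (Fin n → Bool) → ℝ) (S : Finset (Fin n)) : ℝ :=
  (1 / 2 ^ n) * ∑ z : Fin n → Bool, F z * ∏ i ∈ S, chi (z i)

/-- `max_{S ⊆ [n]} |F^(S)|`. -/
noncomputable def maxAbsFCoeff {n : ℕ} (F : (Fin n → Bool) → ℝ) : ℝ :=
  Finset.univ.sup' Finset.univ_nonempty (fun S : Finset (Fin n) => |fCoeff F S|)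

/-!
Write `a_S = E_x χ_S(x) V(x)` and `b_S = E_y χ_S(y) W(y)` for the Fourier coefficients of the
vector strategies. Since `χ_S(x) χ_S(y) = χ_S(x·y)`, Fourier inversion of `gq` turns the bias into
`∑_S (gq)^(S) ⟪a_S, b_S⟫`. Bounding each coefficient by the maximum `M` and applying
Cauchy–Schwarz in `ℝ^d` and then over `S` gives at most `M √(∑ ‖a_S‖²) √(∑ ‖b_S‖²)`, and both
sums are `1` by Parseval because `V` and `W` take unit values.
-/

open scoped InnerProductSpace

lemma chi_mul_chi (a b : Bool) : chi a * chi b = chi (xor a b) := by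
  cases a <;> cases b <;> simp [chi]

section Walsh

variable {ι : Type*}

noncomputable def walsh (S : Finset ι) (x : ι → Bool) : ℝ := ∏ i ∈ S, chi (x i)

lemma walsh_mul_walsh (S : Finset ι) (x y : ι → Bool) :
    walsh S x * walsh S y = walsh S (fun i => xor (x i) (y i)) := by
  simp only [walsh, ← prod_mul_distrib, chi_mul_chi]

/-- `∑_S χ_S(z) = ∏_i (1 + χ(z_i))`, and a factor vanishes as soon as some bit of `z` is `true`. -/
lemma sum_walsh [Fintype ι] [DecidableEq ι] (z : ι → Bool) :
    ∑ S : Finset ι, walsh S z = if z = (fun _ => false) then 2 ^ Fintype.card ι else 0 := by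
  have hprod : ∑ S : Finset ι, walsh S z = ∏ i, (chi (z i) + 1) := by
    rw [prod_add, ← powerset_univ]
    exact sum_congr rfl fun S _ => by simp [walsh]
  rw [hprod]
  split_ifs with hz
  · norm_num [hz, chi]
  · obtain ⟨i, hi⟩ : ∃ i, z i = true := by
      by_contra! h
      exact hz (funext fun i => by simpa using h i)
    exact prod_eq_zero (mem_univ i) (by simp [hi, chi])

lemma sum_walsh_xor [Fintype ι] [DecidableEq ι] (x y : ι → Bool) :
    ∑ S : Finset ι, walsh S (fun i => xor (x i) (y i))
      = if x = y then 2 ^ Fintype.card ι else 0 := by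
  rw [sum_walsh]
  congr 1
  simp [funext_iff]

end Walsh

lemma fCoeff_eq_sum_walsh {n : ℕ} (F : (Fin n → Bool) → ℝ) (S : Finset (Fin n)) :
    fCoeff F S = (1 / 2 ^ n) * ∑ z, F z * walsh S z := rfl

lemma sum_fCoeff_mul_walsh {n : ℕ} (F : (Fin n → Bool) → ℝ) (z : Fin n → Bool) :
    ∑ S, fCoeff F S * walsh S z = F z := by
  calc ∑ S, fCoeff F S * walsh S z
      = (1 / 2 ^ n) * ∑ w, F w * ∑ S, walsh S (fun i => xor (w i) (z i)) := by
        simp only [fCoeff_eq_sum_walsh, mul_sum, sum_mul, mul_assoc, walsh_mul_walsh]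
        rw [sum_comm]
    _ = F z := by
        simp only [sum_walsh_xor, Fintype.card_fin, mul_ite, mul_zero, sum_ite_eq', mem_univ,
          if_true]
        field_simp

section VectorValued

variable {n : ℕ} {E : Type*} [NormedAddCommGroup E] [InnerProductSpace ℝ E]

noncomputable def vecFCoeff (V : (Fin n → Bool) → E) (S : Finset (Fin n)) : E :=
  (1 / 2 ^ n : ℝ) • ∑ x, walsh S x • V x

lemma inner_vecFCoeff (V W : (Fin n → Bool) → E) (S : Finset (Fin n)) :
    ⟪vecFCoeff V S, vecFCoeff W S⟫_ℝ
      = (1 / 2 ^ n) * ((1 / 2 ^ n) *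
          ∑ x, ∑ y, walsh S (fun i => xor (x i) (y i)) * ⟪V x, W y⟫_ℝ) := by
  rw [vecFCoeff, vecFCoeff, real_inner_smul_left, real_inner_smul_right, sum_inner]
  congr 2
  refine sum_congr rfl fun x _ => ?_
  rw [real_inner_smul_left, inner_sum, mul_sum]
  refine sum_congr rfl fun y _ => ?_
  rw [real_inner_smul_right, ← walsh_mul_walsh, mul_assoc]

lemma sum_mul_inner_vecFCoeff (c : Finset (Fin n) → ℝ) (V W : (Fin n → Bool) → E) :
    ∑ S, c S * ⟪vecFCoeff V S, vecFCoeff W S⟫_ℝ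
      = (1 / 2 ^ n) * ((1 / 2 ^ n) *
          ∑ x, ∑ y, (∑ S, c S * walsh S (fun i => xor (x i) (y i))) * ⟪V x, W y⟫_ℝ) := by
  simp only [inner_vecFCoeff, mul_sum, sum_mul]
  rw [sum_comm]
  refine sum_congr rfl fun x _ => ?_
  rw [sum_comm]
  refine sum_congr rfl fun y _ => ?_
  exact sum_congr rfl fun S _ => by ring

lemma sum_norm_vecFCoeff_sq (V : (Fin n → Bool) → E) :
    ∑ S, ‖vecFCoeff V S‖ ^ 2 = (1 / 2 ^ n) * ∑ x, ‖V x‖ ^ 2 := by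
  have h := sum_mul_inner_vecFCoeff (fun _ => 1) V V
  simp only [one_mul, sum_walsh_xor, Fintype.card_fin, ite_mul, zero_mul, sum_ite_eq,
    mem_univ, if_true, real_inner_self_eq_norm_sq] at h
  rw [h, ← mul_sum]
  field_simp

end VectorValued

lemma sum_mul_inner_le {ι E : Type*} [NormedAddCommGroup E] [InnerProductSpace ℝ E]
    (s : Finset ι) (c : ι → ℝ) (a b : ι → E) {M : ℝ} (hM : 0 ≤ M) (hc : ∀ i ∈ s, |c i| ≤ M) :
    ∑ i ∈ s, c i * ⟪a i, b i⟫_ℝ ≤ M * (√(∑ i ∈ s, ‖a i‖ ^ 2) * √(∑ i ∈ s, ‖b i‖ ^ 2)) :=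
  calc ∑ i ∈ s, c i * ⟪a i, b i⟫_ℝ
      ≤ ∑ i ∈ s, M * (‖a i‖ * ‖b i‖) := sum_le_sum fun i hi => by
        refine (le_abs_self _).trans ?_
        rw [abs_mul]
        exact mul_le_mul (hc i hi) (abs_real_inner_le_norm _ _) (abs_nonneg _) hM
    _ = M * ∑ i ∈ s, ‖a i‖ * ‖b i‖ := (mul_sum _ _ _).symm
    _ ≤ M * (√(∑ i ∈ s, ‖a i‖ ^ 2) * √(∑ i ∈ s, ‖b i‖ ^ 2)) :=
        mul_le_mul_of_nonneg_left (Real.sum_mul_le_sqrt_mul_sqrt _ _ _) hM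

lemma abs_fCoeff_le_maxAbsFCoeff {n : ℕ} (F : (Fin n → Bool) → ℝ) (S : Finset (Fin n)) :
    |fCoeff F S| ≤ maxAbsFCoeff F :=
  le_sup' (fun S => |fCoeff F S|) (mem_univ S)

lemma maxAbsFCoeff_nonneg {n : ℕ} (F : (Fin n → Bool) → ℝ) : 0 ≤ maxAbsFCoeff F :=
  (abs_nonneg _).trans (abs_fCoeff_le_maxAbsFCoeff F ∅)

theorem quantum_xor_game_bias_le_max_fourier_general {n d : ℕ} (g q : (Fin n → Bool) → ℝ)
    (V W : (Fin n → Bool) → EuclideanSpace ℝ (Fin d))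
    (hV : ∀ x, ‖V x‖ = 1) (hW : ∀ y, ‖W y‖ = 1) :
    (1 / 2 ^ n) * ((1 / 2 ^ n) *
        ∑ x : Fin n → Bool, ∑ y : Fin n → Bool,
          g (fun i => xor (x i) (y i)) * q (fun i => xor (x i) (y i)) *
            (inner ℝ (V x) (W y) : ℝ))
      ≤ maxAbsFCoeff (fun z => g z * q z) := by
  set F : (Fin n → Bool) → ℝ := fun z => g z * q z
  calc _ = ∑ S, fCoeff F S * ⟪vecFCoeff V S, vecFCoeff W S⟫_ℝ := by
        simp only [sum_mul_inner_vecFCoeff, sum_fCoeff_mul_walsh, F]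
    _ ≤ maxAbsFCoeff F *
          (√(∑ S, ‖vecFCoeff V S‖ ^ 2) * √(∑ S, ‖vecFCoeff W S‖ ^ 2)) :=
        sum_mul_inner_le _ _ _ _ (maxAbsFCoeff_nonneg F) fun S _ => abs_fCoeff_le_maxAbsFCoeff F S
    _ = maxAbsFCoeff F := by
        simp [sum_norm_vecFCoeff_sq, hV, hW]

/-- The quantum (unit-vector strategy) bias of an XOR game for an XOR function `g^⊕`
on an XOR input distribution `2^{-2n} q^⊕` is at most the largest absolute Fourier
coefficient of `gq` (which equals the classical bias). -/
theorem quantum_xor_game_bias_le_max_fourier {n d : ℕ} (g q : (Fin n → Bool) → ℝ)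
    (hg : ∀ z, g z = 1 ∨ g z = -1)
    (hq : ∀ z, 0 ≤ q z) (hq1 : (1 / 2 ^ n) * ∑ z : Fin n → Bool, q z = 1)
    (V W : (Fin n → Bool) → EuclideanSpace ℝ (Fin d))
    (hV : ∀ x, ‖V x‖ = 1) (hW : ∀ y, ‖W y‖ = 1) :
    (1 / 2 ^ n) * ((1 / 2 ^ n) *
        ∑ x : Fin n → Bool, ∑ y : Fin n → Bool,
          g (fun i => xor (x i) (y i)) * q (fun i => xor (x i) (y i)) *
            (inner ℝ (V x) (W y) : ℝ))
      ≤ maxAbsFCoeff (fun z => g z * q z) :=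
  quantum_xor_game_bias_le_max_fourier_general g q V W hV hW
end

section
/- For n ≥ 2, the polynomial equation 4λ^n - (2λ-1)^n - 1 = 0 has a unique root λ* in the interval [1/2, 1], and min over p ∈ [0,1] of max{1 - 2p^n, 2p^n - (2p-1)^n} equals 1 - 2(λ*)^n. -/
/-!
On `[1/2, 1]` the function `2λⁿ - (2λ-1)ⁿ` is monotone, because the chords of `tⁿ` over
`[2a-1, 2b-1]` are no steeper than those over `[a, b]` while the first interval is twice as long.
Hence `4λⁿ - (2λ-1)ⁿ - 1 = (2λⁿ - (2λ-1)ⁿ) - (1 - 2λⁿ)` is strictly increasing there, and it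
changes sign, so it has exactly one root `λ*`. Left of `λ*` the decreasing branch `1 - 2pⁿ` is at
least its value at `λ*`, right of `λ*` the increasing branch is, and both branches agree at `λ*`.
-/

open Set

lemma pow_sub_pow_mul_sub_le {x y a b : ℝ} (n : ℕ) (hx : 0 ≤ x) (hxa : x ≤ a) (hab : a ≤ b)
    (hxy : x ≤ y) (hyb : y ≤ b) :
    (y ^ n - x ^ n) * (b - a) ≤ (b ^ n - a ^ n) * (y - x) := by
  have hsum : ∑ i ∈ Finset.range n, y ^ i * x ^ (n - 1 - i)
      ≤ ∑ i ∈ Finset.range n, b ^ i * a ^ (n - 1 - i) :=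
    Finset.sum_le_sum fun i _ => mul_le_mul (pow_le_pow_left₀ (hx.trans hxy) hyb i)
      (pow_le_pow_left₀ hx hxa _) (pow_nonneg hx _) (pow_nonneg (hx.trans <| hxy.trans hyb) _)
  rw [← geom_sum₂_mul, ← geom_sum₂_mul, mul_assoc, mul_assoc, mul_comm (y - x)]
  exact mul_le_mul_of_nonneg_right hsum (mul_nonneg (sub_nonneg.2 hab) (sub_nonneg.2 hxy))

lemma monotoneOn_two_mul_pow_sub_pow (n : ℕ) :
    MonotoneOn (fun t : ℝ => 2 * t ^ n - (2 * t - 1) ^ n) (Icc (1/2) 1) := by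
  intro a ha b hb hab
  rcases hab.eq_or_lt with rfl | hlt
  · rfl
  have hchord := pow_sub_pow_mul_sub_le n (x := 2 * a - 1) (y := 2 * b - 1)
    (by linarith [ha.1]) (by linarith [ha.2]) hab (by linarith) (by linarith [hb.2])
  have hscaled : ((2 * b - 1) ^ n - (2 * a - 1) ^ n) * (b - a) ≤ (2 * (b ^ n - a ^ n)) * (b - a) := by
    linarith
  have := le_of_mul_le_mul_right hscaled (sub_pos.2 hlt)
  dsimp only
  linarith

lemma strictMonoOn_four_mul_pow_sub_pow_sub_one {n : ℕ} (hn : n ≠ 0) :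
    StrictMonoOn (fun t : ℝ => 4 * t ^ n - (2 * t - 1) ^ n - 1) (Icc (1/2) 1) := by
  intro a ha b hb hab
  have hv := monotoneOn_two_mul_pow_sub_pow n ha hb hab.le
  have hu := pow_lt_pow_left₀ hab (by linarith [ha.1]) hn
  dsimp only at hv ⊢
  linarith

lemma exists_root_four_mul_pow_sub_pow_sub_one {n : ℕ} (hn : 2 ≤ n) :
    ∃ l ∈ Icc (1/2 : ℝ) 1, 4 * l ^ n - (2 * l - 1) ^ n - 1 = 0 := by
  have hhalf : 4 * (1/2 : ℝ) ^ n - (2 * (1/2) - 1) ^ n - 1 ≤ 0 := by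
    have := pow_le_pow_of_le_one (by norm_num : (0:ℝ) ≤ 1/2) (by norm_num) hn
    rw [show 2 * (1/2 : ℝ) - 1 = 0 by norm_num, zero_pow (by omega)]
    linarith [show (1/2 : ℝ) ^ 2 = 1/4 by norm_num]
  have hone : (0 : ℝ) ≤ 4 * 1 ^ n - (2 * 1 - 1) ^ n - 1 := by norm_num
  exact intermediate_value_Icc (by norm_num) (by fun_prop) ⟨hhalf, hone⟩

lemma isLeast_image_max_of_eq {α β : Type*} [LinearOrder α] [LinearOrder β] {u v : α → β}
    {s : Set α} {l : α} (hl : l ∈ s) (hu : ∀ p ∈ s, p ≤ l → u l ≤ u p)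
    (hv : ∀ p ∈ s, l ≤ p → v l ≤ v p) (huv : u l = v l) :
    IsLeast ((fun p => max (u p) (v p)) '' s) (u l) := by
  refine ⟨⟨l, hl, by simp [huv]⟩, ?_⟩
  rintro _ ⟨p, hp, rfl⟩
  rcases le_total p l with hpl | hlp
  · exact (hu p hp hpl).trans (le_max_left _ _)
  · exact huv.le.trans <| (hv p hp hlp).trans (le_max_right _ _)

/-- For `n ≥ 2`, the equation `4λⁿ - (2λ-1)ⁿ - 1 = 0` has a unique root `λ*` in
`[1/2, 1]`, and `min_{p∈[0,1]} max {1 - 2pⁿ, 2pⁿ - (2p-1)ⁿ} = 1 - 2(λ*)ⁿ`. -/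
theorem unique_root_and_min (n : ℕ) (hn : 2 ≤ n) :
    ∃ l : ℝ, l ∈ Set.Icc (1/2 : ℝ) 1 ∧ 4 * l ^ n - (2 * l - 1) ^ n - 1 = 0 ∧
      (∀ l' ∈ Set.Icc (1/2 : ℝ) 1, 4 * l' ^ n - (2 * l' - 1) ^ n - 1 = 0 → l' = l) ∧
      IsLeast
        ((fun p : ℝ => max (1 - 2 * p ^ n) (2 * p ^ n - (2 * p - 1) ^ n)) ''
          Set.Icc (0:ℝ) 1)
        (1 - 2 * l ^ n) := by
  obtain ⟨l, hl, hroot⟩ := exists_root_four_mul_pow_sub_pow_sub_one hn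
  refine ⟨l, hl, hroot, fun l' hl' hroot' =>
    (strictMonoOn_four_mul_pow_sub_pow_sub_one (by omega)).injOn hl' hl (hroot'.trans hroot.symm),
    ?_⟩
  refine isLeast_image_max_of_eq ⟨by linarith [hl.1], hl.2⟩ ?_ ?_ (by linarith)
  · rintro p ⟨hp0, -⟩ hpl
    gcongr
  · rintro p ⟨-, hp1⟩ hlp
    exact monotoneOn_two_mul_pow_sub_pow n hl ⟨hl.1.trans hlp, hp1⟩ hlp
end

section
/- Let f : {-1,1}^n → {-1,1} and ε ∈ (0,1). Then ‖f̂‖₁^ε = (1-ε)‖f̂‖₁ if and only if f ∈ f**, where f* is the set of g : {-1,1}^n → [-1,1] with g(x) = sign(f̂(S_x)) whenever f̂(S_x) ≠ 0 (with S_x = {i : x_i = -1}), and f** is the set of h : {-1,1}^n → [-1,1] such that for some g ∈ f*, h(x) = sign(ĝ(S_x)) whenever ĝ(S_x) ≠ 0. -/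
/-!
`‖f̂‖₁^ε` is the value of the convex program "minimise `‖ĥ‖₁` subject to `‖h - f‖_∞ ≤ ε`", whose
dual is "maximise `⟨f, ĝ⟩ - ε‖ĝ‖₁` subject to `‖g‖_∞ ≤ 1`"; weak duality rests on the symmetry
`⟨g, ĥ⟩ = ⟨h, ĝ⟩` of the Fourier transform read through `x ↦ S_x`. The point `h = (1 - ε) f` shows
that the primal value is at most `(1 - ε)‖f̂‖₁`. If `g ∈ f*` and `f ∈ g*`, then `g` is a dual point
of value exactly `(1 - ε)‖f̂‖₁`. Conversely, if the primal value is `(1 - ε)‖f̂‖₁`, separating the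
open set `{h | ‖ĥ‖₁ < (1 - ε)‖f̂‖₁}` from the feasible box yields a dual point of that value, and
complementary slackness (equality in `⟨g, f̂⟩ ≤ ‖f̂‖₁` and in `⟨f, ĝ⟩ ≤ ‖ĝ‖₁`) forces `g ∈ f*` and
`f ∈ g*`.
-/

open Finset

/-- Fourier ℓ₁ norm `‖F^‖₁ = ∑_S |F^(S)|`. -/
noncomputable def fourierL1 {n : ℕ} (F : (Fin n → Bool) → ℝ) : ℝ :=
  ∑ S : Finset (Fin n), |fCoeff F S|

/-- `ε`-approximate Fourier ℓ₁ norm. -/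
noncomputable def apxFourierL1 {n : ℕ} (f : (Fin n → Bool) → ℝ) (ε : ℝ) : ℝ :=
  sInf (fourierL1 '' {h : (Fin n → Bool) → ℝ | ∀ x, |h x - f x| ≤ ε})

/-- `S_x = {i : x_i = -1}`. -/
def Sx {n : ℕ} (x : Fin n → Bool) : Finset (Fin n) :=
  Finset.univ.filter (fun i => x i = true)

/-- `g ∈ f*`: `g` maps into `[-1,1]` and `g(x) = sign(f^(S_x))` whenever
`f^(S_x) ≠ 0`. -/
def memStar {n : ℕ} (f g : (Fin n → Bool) → ℝ) : Prop :=
  (∀ x, g x ∈ Set.Icc (-1:ℝ) 1) ∧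
  ∀ x, fCoeff f (Sx x) ≠ 0 → g x = Real.sign (fCoeff f (Sx x))

lemma sign_mul_self_eq_abs (a : ℝ) : Real.sign a * a = |a| := by
  rcases lt_trichotomy a 0 with ha | rfl | ha
  · rw [Real.sign_of_neg ha, abs_of_neg ha, neg_one_mul]
  · simp
  · rw [Real.sign_of_pos ha, abs_of_pos ha, one_mul]

lemma abs_sign_le_one (r : ℝ) : |Real.sign r| ≤ 1 := by
  rcases Real.sign_apply_eq r with h | h | h <;> simp [h]

lemma mul_eq_abs_iff_eq_sign {r a : ℝ} : r * a = |a| ↔ (a ≠ 0 → r = Real.sign a) := by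
  by_cases ha : a = 0
  · simp [ha]
  · rw [← sign_mul_self_eq_abs, mul_left_inj' ha]
    exact ⟨fun h _ => h, fun h => h ha⟩

lemma mul_le_mul_abs_of_abs_le {r a b : ℝ} (hr : |r| ≤ b) : r * a ≤ b * |a| :=
  (le_abs_self _).trans (by rw [abs_mul]; exact mul_le_mul_of_nonneg_right hr (abs_nonneg a))

lemma abs_le_one_of_forall_abs_lt {a c : ℝ} (hc : 0 < c) (h : ∀ t, |t| < c → t * a < c) :
    |a| ≤ 1 := by
  by_contra! ha
  have ha0 : a ≠ 0 := abs_pos.1 (one_pos.trans ha)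
  refine (h (c / a) ?_).ne (div_mul_cancel₀ c ha0)
  rw [abs_div, abs_of_pos hc]
  exact div_lt_self hc ha

lemma exists_sum_mul_separating {ι : Type*} [Fintype ι] {s t : Set (ι → ℝ)}
    (hs : Convex ℝ s) (hso : IsOpen s) (ht : Convex ℝ t) (hst : Disjoint s t) :
    ∃ (p : ι → ℝ) (u : ℝ), (∀ a ∈ s, ∑ i, a i * p i < u) ∧ ∀ b ∈ t, u ≤ ∑ i, b i * p i := by
  classical
  obtain ⟨ψ, u, hψs, hψt⟩ := geometric_hahn_banach_open hs hso ht hst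
  have hψ : ∀ a, ψ a = ∑ i, a i * ψ fun j => if i = j then 1 else 0 :=
    (ψ : (ι → ℝ) →ₗ[ℝ] ℝ).pi_apply_eq_sum_univ
  exact ⟨_, u, fun a ha => hψ a ▸ hψs a ha, fun b hb => hψ b ▸ hψt b hb⟩

noncomputable def chiS {n : ℕ} (S : Finset (Fin n)) (z : Fin n → Bool) : ℝ :=
  ∏ i ∈ S, chi (z i)

section FourierAnalysis

variable {n : ℕ}

lemma chi_mul_self (b : Bool) : chi b * chi b = 1 := by cases b <;> simp [chi]

lemma chiS_eq_prod_univ (S : Finset (Fin n)) (z : Fin n → Bool) :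
    chiS S z = ∏ i, if i ∈ S then chi (z i) else 1 := by
  rw [chiS, prod_ite_mem, univ_inter]

lemma chiS_mul_chiS (S T : Finset (Fin n)) (z : Fin n → Bool) :
    chiS S z * chiS T z = chiS (symmDiff S T) z := by
  simp only [chiS_eq_prod_univ, ← prod_mul_distrib]
  refine prod_congr rfl fun i _ => ?_
  by_cases hS : i ∈ S <;> by_cases hT : i ∈ T <;> simp [mem_symmDiff, hS, hT, chi_mul_self]

lemma sum_chiS (U : Finset (Fin n)) :
    ∑ z : Fin n → Bool, chiS U z = if U = ∅ then 2 ^ n else 0 := by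
  simp only [chiS_eq_prod_univ]
  rw [← Fintype.prod_sum fun i b => if i ∈ U then chi b else 1]
  split_ifs with hU
  · simp [hU]
  · obtain ⟨i, hi⟩ := nonempty_iff_ne_empty.2 hU
    exact prod_eq_zero (mem_univ i) (by simp [hi, chi])

lemma sum_chiS_mul_chiS (S T : Finset (Fin n)) :
    ∑ z : Fin n → Bool, chiS S z * chiS T z = if S = T then 2 ^ n else 0 := by
  simp only [chiS_mul_chiS, sum_chiS, ← bot_eq_empty, symmDiff_eq_bot]

lemma chiS_Sx_comm (x z : Fin n → Bool) : chiS (Sx x) z = chiS (Sx z) x := by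
  simp only [chiS_eq_prod_univ, Sx, mem_filter, mem_univ, true_and]
  exact prod_congr rfl fun i _ => by cases x i <;> cases z i <;> simp [chi]

lemma Sx_bijective : Function.Bijective (Sx (n := n)) := by
  refine ⟨fun x y hxy => funext fun i => ?_, fun S => ⟨fun i => decide (i ∈ S), by ext; simp [Sx]⟩⟩
  have hi := congrArg (i ∈ ·) hxy
  simp only [Sx, mem_filter, mem_univ, true_and] at hi
  exact Bool.eq_iff_iff.2 (Iff.of_eq hi)

lemma fCoeff_eq_sum_mul_chiS (F : (Fin n → Bool) → ℝ) (S : Finset (Fin n)) :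
    fCoeff F S = (2 ^ n)⁻¹ * ∑ z, F z * chiS S z := by
  rw [fCoeff, one_div]; rfl

lemma fCoeff_add (F G : (Fin n → Bool) → ℝ) (S : Finset (Fin n)) :
    fCoeff (F + G) S = fCoeff F S + fCoeff G S := by
  simp only [fCoeff, Pi.add_apply, add_mul, sum_add_distrib, mul_add]

lemma fCoeff_smul (c : ℝ) (F : (Fin n → Bool) → ℝ) (S : Finset (Fin n)) :
    fCoeff (c • F) S = c * fCoeff F S := by
  simp only [fCoeff, Pi.smul_apply, smul_eq_mul, mul_assoc, ← mul_sum]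
  ring

lemma fCoeff_chiS (T S : Finset (Fin n)) : fCoeff (chiS T) S = if S = T then 1 else 0 := by
  rw [fCoeff_eq_sum_mul_chiS, sum_chiS_mul_chiS]
  by_cases h : S = T <;> simp [h, Ne.symm]

lemma continuous_fCoeff (S : Finset (Fin n)) :
    Continuous fun F : (Fin n → Bool) → ℝ => fCoeff F S := by
  unfold fCoeff; fun_prop

lemma fCoeff_fCoeff_Sx (F : (Fin n → Bool) → ℝ) (w : Fin n → Bool) :
    fCoeff (fun x => fCoeff F (Sx x)) (Sx w) = F w / 2 ^ n := by
  have horth : ∀ z, ∑ x, chiS (Sx x) z * chiS (Sx w) x = if z = w then 2 ^ n else 0 := by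
    intro z
    simp only [chiS_Sx_comm _ z, sum_chiS_mul_chiS, Sx_bijective.injective.eq_iff]
  calc fCoeff (fun x => fCoeff F (Sx x)) (Sx w)
      = ∑ z, (2 ^ n)⁻¹ * (2 ^ n)⁻¹ * F z * ∑ x, chiS (Sx x) z * chiS (Sx w) x := by
        simp only [fCoeff_eq_sum_mul_chiS, sum_mul, mul_sum]
        rw [sum_comm]
        exact sum_congr rfl fun _ _ => sum_congr rfl fun _ _ => by ring
    _ = F w / 2 ^ n := by
        simp only [horth, mul_ite, mul_zero, sum_ite_eq', mem_univ, if_true]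
        field_simp

lemma fourierL1_nonneg (F : (Fin n → Bool) → ℝ) : 0 ≤ fourierL1 F :=
  sum_nonneg fun _ _ => abs_nonneg _

lemma fourierL1_eq_sum_Sx (F : (Fin n → Bool) → ℝ) :
    fourierL1 F = ∑ x, |fCoeff F (Sx x)| :=
  (Sx_bijective.sum_comp fun S => |fCoeff F S|).symm

lemma fourierL1_smul (c : ℝ) (F : (Fin n → Bool) → ℝ) :
    fourierL1 (c • F) = |c| * fourierL1 F := by
  simp only [fourierL1, fCoeff_smul, abs_mul, mul_sum]

lemma fourierL1_chiS (T : Finset (Fin n)) : fourierL1 (chiS T) = 1 := by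
  simp [fourierL1, fCoeff_chiS, apply_ite]

lemma continuous_fourierL1 : Continuous (fourierL1 (n := n)) :=
  continuous_finsetSum _ fun S _ => (continuous_fCoeff S).abs

lemma convexOn_fourierL1 : ConvexOn ℝ Set.univ (fourierL1 (n := n)) := by
  refine ⟨convex_univ, fun F _ G _ a b ha hb _ => ?_⟩
  simp only [fourierL1, fCoeff_add, fCoeff_smul, smul_eq_mul, mul_sum, ← sum_add_distrib]
  refine sum_le_sum fun S _ => (abs_add_le _ _).trans_eq ?_
  rw [abs_mul, abs_mul, abs_of_nonneg ha, abs_of_nonneg hb]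

lemma fourierL1_pos {F : (Fin n → Bool) → ℝ} (hF : F ≠ 0) : 0 < fourierL1 F := by
  refine (fourierL1_nonneg F).lt_of_ne fun h0 => hF (funext fun w => ?_)
  have hzero : ∀ S, fCoeff F S = 0 := fun S =>
    abs_eq_zero.1 ((sum_eq_zero_iff_of_nonneg fun _ _ => abs_nonneg _).1 h0.symm S (mem_univ S))
  have hinv := fCoeff_fCoeff_Sx F w
  simp only [hzero] at hinv
  simpa [fCoeff] using hinv.symm

end FourierAnalysis

section Duality

variable {n : ℕ}

lemma sum_mul_fCoeff_Sx_comm (g h : (Fin n → Bool) → ℝ) :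
    ∑ x, g x * fCoeff h (Sx x) = ∑ x, h x * fCoeff g (Sx x) := by
  simp only [fCoeff_eq_sum_mul_chiS, mul_sum]
  rw [sum_comm]
  exact sum_congr rfl fun z _ => sum_congr rfl fun x _ => by rw [chiS_Sx_comm]; ring

lemma sum_mul_fCoeff_le {g : (Fin n → Bool) → ℝ} {r : ℝ} (hg : ∀ x, |g x| ≤ r)
    (h : (Fin n → Bool) → ℝ) : ∑ x, g x * fCoeff h (Sx x) ≤ r * fourierL1 h := by
  rw [fourierL1_eq_sum_Sx, mul_sum]
  exact sum_le_sum fun x _ => mul_le_mul_abs_of_abs_le (hg x)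

lemma memStar_iff {f g : (Fin n → Bool) → ℝ} :
    memStar f g ↔ (∀ x, |g x| ≤ 1) ∧ ∑ x, g x * fCoeff f (Sx x) = fourierL1 f := by
  simp only [memStar, Set.mem_Icc, ← abs_le]
  refine and_congr_right fun hg => ?_
  rw [fourierL1_eq_sum_Sx, sum_eq_sum_iff_of_le fun x _ => ?_]
  · simp only [mem_univ, true_imp_iff, mul_eq_abs_iff_eq_sign]
  · simpa using mul_le_mul_abs_of_abs_le (hg x)

noncomputable def dualObjective (f : (Fin n → Bool) → ℝ) (ε : ℝ) (g : (Fin n → Bool) → ℝ) : ℝ :=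
  ∑ z, f z * fCoeff g (Sx z) - ε * fourierL1 g

lemma dualObjective_le_fourierL1 {f g h : (Fin n → Bool) → ℝ} {ε : ℝ} (hg : ∀ x, |g x| ≤ 1)
    (hh : ∀ x, |h x - f x| ≤ ε) : dualObjective f ε g ≤ fourierL1 h := by
  have hdev : ∑ z, (f z - h z) * fCoeff g (Sx z) ≤ ε * fourierL1 g :=
    sum_mul_fCoeff_le (fun z => abs_sub_comm (f z) (h z) ▸ hh z) g
  calc dualObjective f ε g
      = ∑ z, h z * fCoeff g (Sx z) + (∑ z, (f z - h z) * fCoeff g (Sx z) - ε * fourierL1 g) := by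
        simp only [dualObjective, sub_mul, sum_sub_distrib]; ring
    _ ≤ ∑ x, g x * fCoeff h (Sx x) := by rw [sum_mul_fCoeff_Sx_comm]; linarith
    _ ≤ fourierL1 h := by simpa using sum_mul_fCoeff_le hg h

lemma dualObjective_eq_of_memStar {f g : (Fin n → Bool) → ℝ} (hfg : memStar f g)
    (hgf : memStar g f) (ε : ℝ) : dualObjective f ε g = (1 - ε) * fourierL1 f := by
  have hf := (memStar_iff.1 hgf).2
  have hg := (memStar_iff.1 hfg).2
  rw [dualObjective, ← hf, sum_mul_fCoeff_Sx_comm, hg]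
  ring

lemma memStar_of_le_dualObjective {f g : (Fin n → Bool) → ℝ} {ε : ℝ} (hf : ∀ z, |f z| ≤ 1)
    (hε0 : 0 < ε) (hε1 : ε < 1) (hg : ∀ x, |g x| ≤ 1)
    (hobj : (1 - ε) * fourierL1 f ≤ dualObjective f ε g) : memStar f g ∧ memStar g f := by
  rw [dualObjective] at hobj
  set A := ∑ z, f z * fCoeff g (Sx z)
  have hAf : A ≤ fourierL1 f := by
    simpa [A, sum_mul_fCoeff_Sx_comm] using sum_mul_fCoeff_le hg f
  have hAg : A ≤ fourierL1 g := by simpa using sum_mul_fCoeff_le hf g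
  have hfA : fourierL1 f ≤ A := by
    refine le_of_mul_le_mul_left ?_ (sub_pos.2 hε1)
    linarith [mul_le_mul_of_nonneg_left hAg hε0.le]
  have hgA : fourierL1 g ≤ A := by
    refine le_of_mul_le_mul_left ?_ hε0
    linarith [mul_le_mul_of_nonneg_left hAf (sub_pos.2 hε1).le]
  refine ⟨memStar_iff.2 ⟨hg, ?_⟩, memStar_iff.2 ⟨hf, ?_⟩⟩
  · rw [sum_mul_fCoeff_Sx_comm]; exact le_antisymm hAf hfA
  · exact le_antisymm hAg hgA

lemma exists_separating_of_forall_le {f : (Fin n → Bool) → ℝ} {ε c : ℝ} (hε : 0 ≤ ε)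
    (hc : 0 < c) (hlb : ∀ h : (Fin n → Bool) → ℝ, (∀ x, |h x - f x| ≤ ε) → c ≤ fourierL1 h) :
    ∃ p : (Fin n → Bool) → ℝ, (∀ h, fourierL1 h < c → ∑ z, h z * p z < c) ∧
      ∀ h : (Fin n → Bool) → ℝ, (∀ x, |h x - f x| ≤ ε) → c ≤ ∑ z, h z * p z := by
  have hball : {h : (Fin n → Bool) → ℝ | ∀ x, |h x - f x| ≤ ε} = Metric.closedBall f ε := by
    ext h; rw [Metric.mem_closedBall, dist_pi_le_iff hε]; simp [Real.dist_eq]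
  have hfeas : Convex ℝ {h : (Fin n → Bool) → ℝ | ∀ x, |h x - f x| ≤ ε} :=
    hball ▸ convex_closedBall f ε
  obtain ⟨q, u, hq_lt, hq_le⟩ := exists_sum_mul_separating (s := {h | fourierL1 h < c})
    (by simpa using convexOn_fourierL1.convex_lt c)
    (isOpen_lt continuous_fourierL1 continuous_const) hfeas
    (Set.disjoint_left.2 fun h hlt hh => (hlb h hh).not_gt hlt)
  have hu : 0 < u := by simpa using hq_lt 0 (by simpa [fourierL1, fCoeff] using hc)
  have hscale : ∀ h : (Fin n → Bool) → ℝ, ∑ z, h z * ((c / u) • q) z = c / u * ∑ z, h z * q z :=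
    fun h => by simp only [Pi.smul_apply, smul_eq_mul, mul_sum, mul_left_comm]
  refine ⟨(c / u) • q, fun h hh => ?_, fun h hh => ?_⟩
  · calc ∑ z, h z * ((c / u) • q) z = c / u * ∑ z, h z * q z := hscale h
      _ < c / u * u := mul_lt_mul_of_pos_left (hq_lt h hh) (div_pos hc hu)
      _ = c := div_mul_cancel₀ c hu.ne'
  · calc c = c / u * u := (div_mul_cancel₀ c hu.ne').symm
      _ ≤ c / u * ∑ z, h z * q z := mul_le_mul_of_nonneg_left (hq_le h hh) (div_pos hc hu).le
      _ = ∑ z, h z * ((c / u) • q) z := (hscale h).symm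

lemma exists_le_dualObjective {f : (Fin n → Bool) → ℝ} {ε c : ℝ} (hε : 0 ≤ ε) (hc : 0 < c)
    (hlb : ∀ h : (Fin n → Bool) → ℝ, (∀ x, |h x - f x| ≤ ε) → c ≤ fourierL1 h) :
    ∃ g : (Fin n → Bool) → ℝ, (∀ x, |g x| ≤ 1) ∧ c ≤ dualObjective f ε g := by
  obtain ⟨p, hp_lt, hp_le⟩ := exists_separating_of_forall_le hε hc hlb
  -- `g` is built so that `ĝ(S_w) = p w`; testing `p` on `t • χ_{S_x}`, whose Fourier ℓ₁ norm
  -- is `|t|`, then gives `|g x| ≤ 1`.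
  set g : (Fin n → Bool) → ℝ := fun x => 2 ^ n * fCoeff p (Sx x)
  have hpair : ∀ x (t : ℝ), ∑ z, (t • chiS (Sx x)) z * p z = t * g x := fun x t => by
    simp only [g, fCoeff_eq_sum_mul_chiS, Pi.smul_apply, smul_eq_mul, mul_sum]
    exact sum_congr rfl fun z _ => by rw [mul_inv_cancel_left₀ (by positivity)]; ring
  have hg_coeff : ∀ w, fCoeff g (Sx w) = p w := fun w => by
    rw [show g = (2 ^ n : ℝ) • fun x => fCoeff p (Sx x) from rfl, fCoeff_smul, fCoeff_fCoeff_Sx]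
    field_simp
  refine ⟨g, fun x => abs_le_one_of_forall_abs_lt hc fun t ht => ?_, ?_⟩
  · rw [← hpair]
    exact hp_lt _ (by rwa [fourierL1_smul, fourierL1_chiS, mul_one])
  · have hfeas : ∀ x, |(f - ε • Real.sign ∘ p) x - f x| ≤ ε := fun x => by
      simpa [abs_mul, abs_of_nonneg hε] using mul_le_mul_of_nonneg_left (abs_sign_le_one (p x)) hε
    calc c ≤ ∑ z, (f - ε • Real.sign ∘ p) z * p z := hp_le _ hfeas
      _ = ∑ z, f z * p z - ε * ∑ z, |p z| := by
        simp only [Pi.sub_apply, Pi.smul_apply, Function.comp_apply, smul_eq_mul, sub_mul,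
          sum_sub_distrib, mul_sum, mul_assoc, sign_mul_self_eq_abs]
      _ = dualObjective f ε g := by simp only [dualObjective, fourierL1_eq_sum_Sx, hg_coeff]

end Duality

lemma apxFourierL1_eq_iff_forall_le {n : ℕ} {f : (Fin n → Bool) → ℝ} {ε : ℝ}
    (hf : ∀ z, |f z| = 1) (hε0 : 0 ≤ ε) (hε1 : ε ≤ 1) :
    apxFourierL1 f ε = (1 - ε) * fourierL1 f ↔
      ∀ h : (Fin n → Bool) → ℝ, (∀ x, |h x - f x| ≤ ε) → (1 - ε) * fourierL1 f ≤ fourierL1 h := by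
  have hbdd : BddBelow (fourierL1 '' {h : (Fin n → Bool) → ℝ | ∀ x, |h x - f x| ≤ ε}) :=
    ⟨0, by rintro _ ⟨h, -, rfl⟩; exact fourierL1_nonneg h⟩
  have hshrink : (1 - ε) * fourierL1 f = fourierL1 ((1 - ε) • f) := by
    rw [fourierL1_smul, abs_of_nonneg (sub_nonneg.2 hε1)]
  have hshrink_feas : ∀ x, |((1 - ε) • f) x - f x| ≤ ε := fun x => by
    simp [sub_mul, abs_mul, hf x, abs_of_nonneg hε0]
  constructor
  · intro heq h hh
    exact heq ▸ csInf_le hbdd ⟨h, hh, rfl⟩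
  · refine fun hlb => IsLeast.csInf_eq ⟨⟨_, hshrink_feas, hshrink.symm⟩, ?_⟩
    rintro _ ⟨h, hh, rfl⟩
    exact hlb h hh

/-- `‖f^‖₁^ε = (1-ε)‖f^‖₁` iff `f ∈ f**`, i.e. iff there is `g ∈ f*` with
`f(x) = sign(g^(S_x))` whenever `g^(S_x) ≠ 0`. -/
theorem apx_l1_eq_iff {n : ℕ} (f : (Fin n → Bool) → ℝ)
    (hf : ∀ z, f z = 1 ∨ f z = -1) (ε : ℝ) (hε : ε ∈ Set.Ioo (0:ℝ) 1) :
    apxFourierL1 f ε = (1 - ε) * fourierL1 f ↔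
      ∃ g, memStar f g ∧ memStar g f := by
  obtain ⟨hε0, hε1⟩ := hε
  have habs : ∀ z, |f z| = 1 := fun z => by rcases hf z with h | h <;> simp [h]
  have hf0 : f ≠ 0 := fun h0 => by simpa [h0] using habs fun _ => false
  rw [apxFourierL1_eq_iff_forall_le habs hε0.le hε1.le]
  constructor
  · intro hlb
    obtain ⟨g, hg, hobj⟩ :=
      exists_le_dualObjective hε0.le (mul_pos (sub_pos.2 hε1) (fourierL1_pos hf0)) hlb
    exact ⟨g, memStar_of_le_dualObjective (fun z => (habs z).le) hε0 hε1 hg hobj⟩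
  · rintro ⟨g, hfg, hgf⟩ h hh
    rw [← dualObjective_eq_of_memStar hfg hgf]
    exact dualObjective_le_fourierL1 (memStar_iff.1 hfg).1 hh
end

section
/- Let g : {-1,1}^n → {-1,1} and let G : {-1,1}^n → [-1,1] satisfy G(x) = sign(ĝ(S_x)) whenever ĝ(S_x) ≠ 0 (i.e., G ∈ g*). Then Σ_{S⊆[n]} |Ĝ(S)| ≥ Σ_{S⊆[n]} |ĝ(S)|, i.e., ‖Ĝ‖₁ ≥ ‖ĝ‖₁. -/
/-!
Identify `x` with `S_x`. Since `G x = sign ĝ(S_x)` wherever that sign is nonzero,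
`‖ĝ‖₁ = ∑_x ĝ(S_x) G(x)`. The character `∏_{i ∈ S_x} z_i` is symmetric in `x` and `z`, so this
pairing equals `∑_z g(z) Ĝ(S_z)`, which is at most `∑_z |Ĝ(S_z)| = ‖Ĝ‖₁` because `|g| ≤ 1`.
-/

open Finset

lemma mul_eq_abs_of_eq_sign {c y : ℝ} (h : c ≠ 0 → y = Real.sign c) : c * y = |c| := by
  rcases lt_trichotomy c 0 with hc | rfl | hc
  · rw [h hc.ne, Real.sign_of_neg hc, abs_of_neg hc, mul_neg_one]
  · simp
  · rw [h hc.ne', Real.sign_of_pos hc, abs_of_pos hc, mul_one]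

section

variable {n : ℕ}

lemma prod_chi_Sx_eq_prod_chi_and (x z : Fin n → Bool) :
    ∏ i ∈ Sx x, chi (z i) = ∏ i, chi (x i && z i) := by
  rw [Sx, prod_filter]
  refine prod_congr rfl fun i _ => ?_
  cases x i <;> simp [chi]

lemma prod_chi_Sx_comm (x z : Fin n → Bool) :
    ∏ i ∈ Sx x, chi (z i) = ∏ i ∈ Sx z, chi (x i) := by
  simp only [prod_chi_Sx_eq_prod_chi_and, Bool.and_comm]

lemma sum_fCoeff_Sx_mul_comm (F H : (Fin n → Bool) → ℝ) :
    ∑ x, fCoeff F (Sx x) * H x = ∑ z, F z * fCoeff H (Sx z) := by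
  simp only [fCoeff, mul_sum, sum_mul]
  rw [sum_comm]
  refine sum_congr rfl fun z _ => sum_congr rfl fun x _ => ?_
  rw [prod_chi_Sx_comm x z]
  ring

lemma sum_mul_fCoeff_Sx_le_fourierL1 {F : (Fin n → Bool) → ℝ} (hF : ∀ z, |F z| ≤ 1)
    (H : (Fin n → Bool) → ℝ) : ∑ z, F z * fCoeff H (Sx z) ≤ fourierL1 H := by
  rw [fourierL1_eq_sum_Sx]
  refine sum_le_sum fun z _ => ?_
  calc F z * fCoeff H (Sx z) ≤ |F z| * |fCoeff H (Sx z)| := by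
        rw [← abs_mul]; exact le_abs_self _
    _ ≤ |fCoeff H (Sx z)| := mul_le_of_le_one_left (abs_nonneg _) (hF z)

end

theorem star_l1_ge_general {n : ℕ} (g G : (Fin n → Bool) → ℝ)
    (hg : ∀ z, g z = 1 ∨ g z = -1)
    (hGs : ∀ x, fCoeff g (Sx x) ≠ 0 → G x = Real.sign (fCoeff g (Sx x))) :
    fourierL1 g ≤ fourierL1 G :=
  calc fourierL1 g = ∑ x, fCoeff g (Sx x) * G x := by
        rw [fourierL1_eq_sum_Sx]
        exact sum_congr rfl fun x _ => (mul_eq_abs_of_eq_sign (hGs x)).symm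
    _ = ∑ z, g z * fCoeff G (Sx z) := sum_fCoeff_Sx_mul_comm g G
    _ ≤ fourierL1 G :=
        sum_mul_fCoeff_Sx_le_fourierL1 (fun z => by rcases hg z with h | h <;> simp [h]) G

/-- If `g : {-1,1}ⁿ → {-1,1}` and `G ∈ g*` (i.e. `G` maps into `[-1,1]` and
`G(x) = sign(g^(S_x))` whenever `g^(S_x) ≠ 0`), then `‖G^‖₁ ≥ ‖g^‖₁`. -/
theorem star_l1_ge {n : ℕ} (g G : (Fin n → Bool) → ℝ)
    (hg : ∀ z, g z = 1 ∨ g z = -1)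
    (hG1 : ∀ x, G x ∈ Set.Icc (-1:ℝ) 1)
    (hGs : ∀ x, fCoeff g (Sx x) ≠ 0 → G x = Real.sign (fCoeff g (Sx x))) :
    fourierL1 g ≤ fourierL1 G :=
  star_l1_ge_general g G hg hGs
end
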